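/- Anti-substitution lemma for system U: if Φ is a derivation of Γ' ⊢ t{x:=u} : τ in system U, then there exist a finite index set I, types σ_i (i ∈ I), a derivation Φ_t of Γ; x:[σ_i]_{i∈I} ⊢ t : τ, and derivations Φ^i_u of Δ_i ⊢ u : σ_i for each i ∈ I, such that Γ' = Γ +_{i∈I} Δ_i and |Φ| = |Φ_t| + Σ_{i∈I}|Φ^i_u| − |I|. -/

import Mathlib

/-! # The Bang Calculus Revisited: common definitions.

Terms are represented with de Bruijn indices, so that all the meta-level
substitutions are capture-avoiding by construction. -/

/-- Terms of the λ!-calculus.  `esub t u` is the explicit substitution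
`t[0\u]`: the (anonymous) binder scopes over `t`, not over `u`. -/
inductive Tm : Type
  | var : ℕ → Tm
  | app : Tm → Tm → Tm
  | lam : Tm → Tm
  | bang : Tm → Tm
  | der : Tm → Tm
  | esub : Tm → Tm → Tm
  deriving DecidableEq

namespace Tm

/-- lifting a renaming under a binder -/
def liftR (f : ℕ → ℕ) : ℕ → ℕ
  | 0 => 0
  | k + 1 => f k + 1

/-- renaming of free variables -/
def rename (f : ℕ → ℕ) : Tm → Tm
  | var k => var (f k)
  | app t u => app (rename f t) (rename f u)
  | lam t => lam (rename (liftR f) t)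
  | bang t => bang (rename f t)
  | der t => der (rename f t)
  | esub t u => esub (rename (liftR f) t) (rename f u)

/-- lifting a simultaneous substitution under a binder -/
def liftS (σ : ℕ → Tm) : ℕ → Tm
  | 0 => var 0
  | k + 1 => rename (· + 1) (σ k)

/-- simultaneous (capture-avoiding) substitution -/
def subst (σ : ℕ → Tm) : Tm → Tm
  | var k => σ k
  | app t u => app (subst σ t) (subst σ u)
  | lam t => lam (subst (liftS σ) t)
  | bang t => bang (subst σ t)
  | der t => der (subst σ t)
  | esub t u => esub (subst (liftS σ) t) (subst σ u)

/-- capture-avoiding substitution of `u` for the variable `0` of `t`,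
where the result is placed under `n` extra binders (and `u` already lives
at that depth). -/
def substIn (n : ℕ) (u : Tm) (t : Tm) : Tm :=
  subst (fun k => match k with
    | 0 => u
    | k + 1 => var (k + n)) t

/-- capture-avoiding meta-level substitution `t{0 := u}` -/
def subst0 (u : Tm) (t : Tm) : Tm := substIn 0 u t

/-- plugging a term into a list context `L ::= ◻ | L[x\t]`; the head of the
list is the argument of the outermost explicit substitution. -/
def plug : List Tm → Tm → Tm
  | [], s => s
  | e :: L, s => esub (plug L s) e

/-- the w-size of a term -/
def wsize : Tm → ℕ
  | var _ => 0
  | app t u => 1 + wsize t + wsize u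
  | lam t => 1 + wsize t
  | bang _ => 0
  | der t => 1 + wsize t
  | esub t u => 1 + wsize t + wsize u

end Tm

/-- the names of the three rewriting rules of the λ!-calculus -/
inductive Rule : Type
  | dB | sb | db
  deriving DecidableEq

open Tm in
/-- the three rewriting rules, applied at the root (at a distance) -/
inductive Root : Rule → Tm → Tm → Prop
  | dB (L : List Tm) (t u : Tm) :
      Root .dB (app (plug L (lam t)) u)
               (plug L (esub t (rename (· + L.length) u)))
  | sb (L : List Tm) (t u : Tm) :
      Root .sb (esub t (plug L (bang u))) (plug L (substIn L.length u t))
  | db (L : List Tm) (t : Tm) :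
      Root .db (der (plug L (bang t))) (plug L t)

/-- closure of each rule under weak contexts (no reduction under `bang`) -/
inductive Step : Rule → Tm → Tm → Prop
  | root {r : Rule} {t t' : Tm} : Root r t t' → Step r t t'
  | appL {r t t'} (u : Tm) : Step r t t' → Step r (Tm.app t u) (Tm.app t' u)
  | appR {r u u'} (t : Tm) : Step r u u' → Step r (Tm.app t u) (Tm.app t u')
  | lam {r t t'} : Step r t t' → Step r (Tm.lam t) (Tm.lam t')
  | der {r t t'} : Step r t t' → Step r (Tm.der t) (Tm.der t')
  | esubL {r t t'} (u : Tm) : Step r t t' → Step r (Tm.esub t u) (Tm.esub t' u)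
  | esubR {r u u'} (t : Tm) : Step r u u' → Step r (Tm.esub t u) (Tm.esub t u')

/-- the weak reduction `→w` of the λ!-calculus -/
def StepW (t t' : Tm) : Prop := ∃ r, Step r t t'

/-- counted weak reduction: `RedCnt t (b, e) u` holds iff `t →w* u` using `b`
dB-steps and `e` steps of kind s!/d!. -/
inductive RedCnt : Tm → ℕ × ℕ → Tm → Prop
  | refl (t : Tm) : RedCnt t (0, 0) t
  | db {t t₁ u : Tm} {b e : ℕ} :
      Step .dB t t₁ → RedCnt t₁ (b, e) u → RedCnt t (b + 1, e) u
  | ex {t t₁ u : Tm} {b e : ℕ} :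
      (Step .sb t t₁ ∨ Step .db t t₁) → RedCnt t₁ (b, e) u →
      RedCnt t (b, e + 1) u

mutual
  /-- neutral w-normal terms -/
  inductive NeW : Tm → Prop
    | var (k : ℕ) : NeW (Tm.var k)
    | app {t u : Tm} : NaW t → NoW u → NeW (Tm.app t u)
    | der {t : Tm} : NbW t → NeW (Tm.der t)
    | esub {t u : Tm} : NeW t → NbW u → NeW (Tm.esub t u)
  /-- neutral-abs w-normal terms -/
  inductive NaW : Tm → Prop
    | bang (t : Tm) : NaW (Tm.bang t)
    | ne {t : Tm} : NeW t → NaW t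
    | esub {t u : Tm} : NaW t → NbW u → NaW (Tm.esub t u)
  /-- neutral-bang w-normal terms -/
  inductive NbW : Tm → Prop
    | ne {t : Tm} : NeW t → NbW t
    | lam {t : Tm} : NoW t → NbW (Tm.lam t)
    | esub {t u : Tm} : NbW t → NbW u → NbW (Tm.esub t u)
  /-- w-normal terms -/
  inductive NoW : Tm → Prop
    | na {t : Tm} : NaW t → NoW t
    | nb {t : Tm} : NbW t → NoW t
end

/-- clashes -/
inductive Clash : Tm → Prop
  | appBang (L : List Tm) (t u : Tm) : Clash (Tm.app (Tm.plug L (Tm.bang t)) u)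
  | esubLam (L : List Tm) (t u : Tm) : Clash (Tm.esub t (Tm.plug L (Tm.lam u)))
  | derLam (L : List Tm) (u : Tm) : Clash (Tm.der (Tm.plug L (Tm.lam u)))
  | appLam (L : List Tm) (t u : Tm) : Clash (Tm.app t (Tm.plug L (Tm.lam u)))

/-- `WSub t s` holds iff `t = W⟨s⟩` for some weak context `W` -/
inductive WSub : Tm → Tm → Prop
  | refl (t : Tm) : WSub t t
  | appL {t s : Tm} (u : Tm) : WSub t s → WSub (Tm.app t u) s
  | appR {u s : Tm} (t : Tm) : WSub u s → WSub (Tm.app t u) s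
  | lam {t s : Tm} : WSub t s → WSub (Tm.lam t) s
  | der {t s : Tm} : WSub t s → WSub (Tm.der t) s
  | esubL {t s : Tm} (u : Tm) : WSub t s → WSub (Tm.esub t u) s
  | esubR {u s : Tm} (t : Tm) : WSub u s → WSub (Tm.esub t u) s

/-- weak clash freeness -/
def Wcf (t : Tm) : Prop := ¬ ∃ s, WSub t s ∧ Clash s

mutual
  /-- neutral weak clash free normal terms -/
  inductive NeCF : Tm → Prop
    | var (k : ℕ) : NeCF (Tm.var k)
    | app {t u : Tm} : NeCF t → NaCF u → NeCF (Tm.app t u)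
    | der {t : Tm} : NeCF t → NeCF (Tm.der t)
    | esub {t u : Tm} : NeCF t → NeCF u → NeCF (Tm.esub t u)
  /-- neutral-abs weak clash free normal terms -/
  inductive NaCF : Tm → Prop
    | bang (t : Tm) : NaCF (Tm.bang t)
    | ne {t : Tm} : NeCF t → NaCF t
    | esub {t u : Tm} : NaCF t → NeCF u → NaCF (Tm.esub t u)
  /-- neutral-bang weak clash free normal terms -/
  inductive NbCF : Tm → Prop
    | ne {t : Tm} : NeCF t → NbCF t
    | lam {t : Tm} : NoCF t → NbCF (Tm.lam t)
    | esub {t u : Tm} : NbCF t → NeCF u → NbCF (Tm.esub t u)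
  /-- weak clash free normal terms -/
  inductive NoCF : Tm → Prop
    | na {t : Tm} : NaCF t → NoCF t
    | nb {t : Tm} : NbCF t → NoCF t
end

/-- Types of system 𝒰: base types, multiset types and arrow types.  A
multiset type is given by a list of types (a representative of the multiset
it determines). -/
inductive Ty : Type
  | base : ℕ → Ty
  | mult : List Ty → Ty
  | arr : List Ty → Ty → Ty

/-- typing contexts: functions from (de Bruijn) variables to multiset types -/
abbrev Ctx := ℕ → Multiset Ty

/-- the context mapping `k` to `M` and anything else to the empty multiset -/
def Ctx.single (k : ℕ) (M : Multiset Ty) : Ctx := fun j => if j = k then M else 0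

/-- removing the (type of the) bound variable `0` from a context -/
def Ctx.tail (Γ : Ctx) : Ctx := fun k => Γ (k + 1)

/-- extending a context with a multiset type for a fresh variable `0` -/
def Ctx.cons (M : Multiset Ty) (Γ : Ctx) : Ctx := fun k =>
  match k with
  | 0 => M
  | k + 1 => Γ k

/-- Sized typing of system 𝒰: `DerU Γ t τ n` means that there is a derivation
of `Γ ⊢ t : τ` whose size (number of rules, not counting `bg`) is `n`. -/
inductive DerU : Ctx → Tm → Ty → ℕ → Prop
  | ax (k : ℕ) (σ : Ty) : DerU (Ctx.single k {σ}) (Tm.var k) σ 1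
  | app {Γ Δ : Ctx} {t u : Tm} {M : List Ty} {τ : Ty} {n m : ℕ} :
      DerU Γ t (Ty.arr M τ) n → DerU Δ u (Ty.mult M) m →
      DerU (Γ + Δ) (Tm.app t u) τ (n + m + 1)
  | abs {Γ : Ctx} {t : Tm} {τ : Ty} {n : ℕ} (M : List Ty) :
      DerU Γ t τ n → Multiset.ofList M = Γ 0 →
      DerU (Ctx.tail Γ) (Tm.lam t) (Ty.arr M τ) (n + 1)
  | es {Γ Δ : Ctx} {t u : Tm} {σ : Ty} {M : List Ty} {n m : ℕ} :
      DerU Γ t σ n → DerU Δ u (Ty.mult M) m → Multiset.ofList M = Γ 0 →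
      DerU (Ctx.tail Γ + Δ) (Tm.esub t u) σ (n + m + 1)
  | bg {t : Tm} (prs : List (Ctx × Ty × ℕ)) :
      (∀ p ∈ prs, DerU p.1 t p.2.1 p.2.2) →
      DerU ((prs.map (·.1)).sum) (Tm.bang t)
           (Ty.mult (prs.map (·.2.1))) ((prs.map (·.2.2)).sum)
  | dr {Γ : Ctx} {t : Tm} {σ : Ty} {n : ℕ} :
      DerU Γ t (Ty.mult [σ]) n → DerU Γ (Tm.der t) σ (n + 1)

/-! ## The source λ-calculus with explicit substitutions (CBN / CBV) -/

/-- terms of the λ-calculus with explicit substitutions (de Bruijn) -/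
inductive Lm : Type
  | var : ℕ → Lm
  | app : Lm → Lm → Lm
  | lam : Lm → Lm
  | esub : Lm → Lm → Lm
  deriving DecidableEq

namespace Lm

def liftR (f : ℕ → ℕ) : ℕ → ℕ
  | 0 => 0
  | k + 1 => f k + 1

def rename (f : ℕ → ℕ) : Lm → Lm
  | var k => var (f k)
  | app t u => app (rename f t) (rename f u)
  | lam t => lam (rename (liftR f) t)
  | esub t u => esub (rename (liftR f) t) (rename f u)

def liftS (σ : ℕ → Lm) : ℕ → Lm
  | 0 => var 0
  | k + 1 => rename (· + 1) (σ k)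

def subst (σ : ℕ → Lm) : Lm → Lm
  | var k => σ k
  | app t u => app (subst σ t) (subst σ u)
  | lam t => lam (subst (liftS σ) t)
  | esub t u => esub (subst (liftS σ) t) (subst σ u)

def substIn (n : ℕ) (u : Lm) (t : Lm) : Lm :=
  subst (fun k => match k with
    | 0 => u
    | k + 1 => var (k + n)) t

/-- capture-avoiding meta-level substitution `t{0 := u}` -/
def subst0 (u : Lm) (t : Lm) : Lm := substIn 0 u t

def plug : List Lm → Lm → Lm
  | [], s => s
  | e :: L, s => esub (plug L s) e

/-- values -/
def IsVal : Lm → Prop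
  | var _ => True
  | lam _ => True
  | _ => False

/-- the n-size of a term -/
def nsize : Lm → ℕ
  | var _ => 0
  | lam t => 1 + nsize t
  | app t _ => 1 + nsize t
  | esub t _ => 1 + nsize t

/-- the v-size of a term -/
def vsize : Lm → ℕ
  | var _ => 0
  | lam _ => 0
  | app t u => 1 + vsize t + vsize u
  | esub t u => 1 + vsize t + vsize u

end Lm

/-- names of the CBN rules -/
inductive NRule : Type
  | dB | s
  deriving DecidableEq

/-- call-by-name reduction (closure of dB and s under CBN contexts) -/
inductive StepN : NRule → Lm → Lm → Prop
  | dB (L : List Lm) (t u : Lm) :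
      StepN .dB (Lm.app (Lm.plug L (Lm.lam t)) u)
                (Lm.plug L (Lm.esub t (Lm.rename (· + L.length) u)))
  | s (t u : Lm) : StepN .s (Lm.esub t u) (Lm.subst0 u t)
  | appL {r t t'} (u : Lm) : StepN r t t' → StepN r (Lm.app t u) (Lm.app t' u)
  | lam {r t t'} : StepN r t t' → StepN r (Lm.lam t) (Lm.lam t')
  | esubL {r t t'} (u : Lm) : StepN r t t' → StepN r (Lm.esub t u) (Lm.esub t' u)

/-- names of the CBV rules -/
inductive VRule : Type
  | dB | sv
  deriving DecidableEq

/-- call-by-value reduction (closure of dB and sv under CBV contexts) -/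
inductive StepV : VRule → Lm → Lm → Prop
  | dB (L : List Lm) (t u : Lm) :
      StepV .dB (Lm.app (Lm.plug L (Lm.lam t)) u)
                (Lm.plug L (Lm.esub t (Lm.rename (· + L.length) u)))
  | sv (L : List Lm) (t v : Lm) (hv : Lm.IsVal v) :
      StepV .sv (Lm.esub t (Lm.plug L v)) (Lm.plug L (Lm.substIn L.length v t))
  | appL {r t t'} (u : Lm) : StepV r t t' → StepV r (Lm.app t u) (Lm.app t' u)
  | appR {r u u'} (t : Lm) : StepV r u u' → StepV r (Lm.app t u) (Lm.app t u')
  | esubL {r t t'} (u : Lm) : StepV r t t' → StepV r (Lm.esub t u) (Lm.esub t' u)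
  | esubR {r u u'} (t : Lm) : StepV r u u' → StepV r (Lm.esub t u) (Lm.esub t u')

mutual
  /-- CBN neutral terms -/
  inductive NeN : Lm → Prop
    | var (k : ℕ) : NeN (Lm.var k)
    | app {t : Lm} (u : Lm) : NeN t → NeN (Lm.app t u)
  /-- CBN normal terms -/
  inductive NoN : Lm → Prop
    | lam {t : Lm} : NoN t → NoN (Lm.lam t)
    | ne {t : Lm} : NeN t → NoN t
end

mutual
  /-- CBV (substituted) variables -/
  inductive VrV : Lm → Prop
    | var (k : ℕ) : VrV (Lm.var k)
    | esub {t u : Lm} : VrV t → NeV u → VrV (Lm.esub t u)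
  /-- CBV neutral terms -/
  inductive NeV : Lm → Prop
    | app₁ {t u : Lm} : VrV t → NoV u → NeV (Lm.app t u)
    | app₂ {t u : Lm} : NeV t → NoV u → NeV (Lm.app t u)
    | esub {t u : Lm} : NeV t → NeV u → NeV (Lm.esub t u)
  /-- CBV normal terms -/
  inductive NoV : Lm → Prop
    | lam (t : Lm) : NoV (Lm.lam t)
    | vr {t : Lm} : VrV t → NoV t
    | ne {t : Lm} : NeV t → NoV t
    | esub {t u : Lm} : NoV t → NeV u → NoV (Lm.esub t u)
end

/-- counted CBN reduction, recording the number of dB- and s-steps -/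
inductive RedCntN : Lm → ℕ × ℕ → Lm → Prop
  | refl (t : Lm) : RedCntN t (0, 0) t
  | db {t t₁ u : Lm} {b e : ℕ} :
      StepN .dB t t₁ → RedCntN t₁ (b, e) u → RedCntN t (b + 1, e) u
  | s {t t₁ u : Lm} {b e : ℕ} :
      StepN .s t t₁ → RedCntN t₁ (b, e) u → RedCntN t (b, e + 1) u

/-- counted CBV reduction, recording the number of dB- and sv-steps -/
inductive RedCntV : Lm → ℕ × ℕ → Lm → Prop
  | refl (t : Lm) : RedCntV t (0, 0) t
  | db {t t₁ u : Lm} {b e : ℕ} :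
      StepV .dB t t₁ → RedCntV t₁ (b, e) u → RedCntV t (b + 1, e) u
  | sv {t t₁ u : Lm} {b e : ℕ} :
      StepV .sv t t₁ → RedCntV t₁ (b, e) u → RedCntV t (b, e + 1) u

/-- the CBN embedding into the λ!-calculus -/
def cbn : Lm → Tm
  | .var k => .var k
  | .lam t => .lam (cbn t)
  | .app t u => .app (cbn t) (.bang (cbn u))
  | .esub t u => .esub (cbn t) (.bang (cbn u))

/-- `deBang t = some s'` iff `t = L⟨!s⟩` and `s' = L⟨s⟩` -/
def deBang : Tm → Option Tm
  | .bang s => some s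
  | .esub t e => (deBang t).map (fun s => Tm.esub s e)
  | _ => none

/-- the CBV embedding into the λ!-calculus -/
def cbv : Lm → Tm
  | .var k => .bang (.var k)
  | .lam t => .bang (.lam (cbv t))
  | .app t u =>
      match deBang (cbv t) with
      | some r => Tm.app r (cbv u)
      | none => Tm.app (.der (cbv t)) (cbv u)
  | .esub t u => .esub (cbv t) (cbv u)

/-- Sized typing of system 𝒩 (call-by-name): `DerN Γ t τ n` means that there
is a derivation of `Γ ⊢ t : τ` of size `n` (counting all rules). -/
inductive DerN : Ctx → Lm → Ty → ℕ → Prop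
  | ax (k : ℕ) (σ : Ty) : DerN (Ctx.single k {σ}) (Lm.var k) σ 1
  | app {Γ : Ctx} {t u : Lm} {τ : Ty} {n : ℕ} (prs : List (Ctx × Ty × ℕ)) :
      DerN Γ t (Ty.arr (prs.map (·.2.1)) τ) n →
      (∀ p ∈ prs, DerN p.1 u p.2.1 p.2.2) →
      DerN (Γ + (prs.map (·.1)).sum) (Lm.app t u) τ
           (n + (prs.map (·.2.2)).sum + 1)
  | abs {Γ : Ctx} {t : Lm} {τ : Ty} {n : ℕ} (M : List Ty) :
      DerN Γ t τ n → Multiset.ofList M = Γ 0 →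
      DerN (Ctx.tail Γ) (Lm.lam t) (Ty.arr M τ) (n + 1)
  | es {Γ : Ctx} {t u : Lm} {τ : Ty} {n : ℕ} (prs : List (Ctx × Ty × ℕ)) :
      DerN Γ t τ n →
      Multiset.ofList (prs.map (·.2.1)) = Γ 0 →
      (∀ p ∈ prs, DerN p.1 u p.2.1 p.2.2) →
      DerN (Ctx.tail Γ + (prs.map (·.1)).sum) (Lm.esub t u) τ
           (n + (prs.map (·.2.2)).sum + 1)

/-- Sized typing of system 𝒱 (call-by-value): `DerV Γ t τ n` means that there
is a derivation of `Γ ⊢ t : τ` of size `n` (each rule counts 1, except that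
`ax` counts the cardinal of its multiset and `abs` contributes the sizes of
its premises plus the number of premises). -/
inductive DerV : Ctx → Lm → Ty → ℕ → Prop
  | ax (k : ℕ) (M : List Ty) :
      DerV (Ctx.single k (Multiset.ofList M)) (Lm.var k) (Ty.mult M) M.length
  | es {Γ Δ : Ctx} {t u : Lm} {σ : Ty} {M : List Ty} {n m : ℕ} :
      DerV Γ t σ n → DerV Δ u (Ty.mult M) m → Multiset.ofList M = Γ 0 →
      DerV (Ctx.tail Γ + Δ) (Lm.esub t u) σ (n + m + 1)
  | abs {t : Lm} (prs : List (Ctx × List Ty × Ty × ℕ)) :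
      (∀ p ∈ prs, DerV p.1 t p.2.2.1 p.2.2.2) →
      (∀ p ∈ prs, Multiset.ofList p.2.1 = p.1 0) →
      DerV ((prs.map (fun p => Ctx.tail p.1)).sum) (Lm.lam t)
           (Ty.mult (prs.map (fun p => Ty.arr p.2.1 p.2.2.1)))
           ((prs.map (·.2.2.2)).sum + prs.length)
  | app {Γ Δ : Ctx} {t u : Lm} {M : List Ty} {τ : Ty} {n m : ℕ} :
      DerV Γ t (Ty.mult [Ty.arr M τ]) n → DerV Δ u (Ty.mult M) m →
      DerV (Γ + Δ) (Lm.app t u) τ (n + m + 1)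

/-! Anti-substitution is proved by induction on `t`, for the substitution of `u` at an
arbitrary de Bruijn index `j` (under `j` binders `u` appears shifted by `j`).  The
derivations of `u` that type its copies in `t{x:=u}` are gathered into a single derivation
of `!u : [σᵢ]ᵢ`, and each copy of `u` is replaced in `t` by an axiom for `x`; this is where
the `|I|` of the size equation comes from.  Under a binder the gathered derivations type a
shifted copy of `u`, and anti-renaming takes them back to `u`. -/

namespace Ctx

def insertAt (j : ℕ) (M : Multiset Ty) (Γ : Ctx) : Ctx := fun k =>
  if k < j then Γ k else if k = j then M else Γ (k - 1)

theorem insertAt_add (j : ℕ) (M N : Multiset Ty) (Γ Δ : Ctx) :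
    insertAt j M Γ + insertAt j N Δ = insertAt j (M + N) (Γ + Δ) := by
  funext k
  simp only [insertAt, Pi.add_apply]
  split_ifs <;> rfl

theorem insertAt_zero_ctx (j : ℕ) (M : Multiset Ty) : insertAt j M 0 = single j M := by
  funext k
  simp only [insertAt, single, Pi.zero_apply]
  split_ifs <;> first | rfl | omega

theorem insertAt_zero_zero (j : ℕ) : insertAt j 0 0 = 0 := by
  funext k
  simp [insertAt]

theorem insertAt_zero (M : Multiset Ty) (Γ : Ctx) : insertAt 0 M Γ = cons M Γ := by
  funext k
  cases k <;> rfl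

theorem insertAt_succ_apply_zero (j : ℕ) (M : Multiset Ty) (Γ : Ctx) :
    insertAt (j + 1) M Γ 0 = Γ 0 :=
  rfl

theorem tail_insertAt_succ (j : ℕ) (M : Multiset Ty) (Γ : Ctx) :
    tail (insertAt (j + 1) M Γ) = insertAt j M (tail Γ) := by
  funext k
  simp only [tail, insertAt]
  split_ifs <;> first | rfl | omega | (congr 1; omega)

theorem single_comp {f : ℕ → ℕ} (hf : Function.Injective f) (i : ℕ) (M : Multiset Ty) :
    single (f i) M ∘ f = single i M := by
  funext k
  simp [single, hf.eq_iff]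

end Ctx

namespace Tm

theorem liftR_id : liftR id = id := by
  funext k; cases k <;> rfl

theorem liftR_comp (f g : ℕ → ℕ) : liftR g ∘ liftR f = liftR (g ∘ f) := by
  funext k; cases k <;> rfl

theorem liftR_injective {f : ℕ → ℕ} (hf : Function.Injective f) :
    Function.Injective (liftR f) := by
  rintro (_ | a) (_ | b) h <;> simp only [liftR, reduceCtorEq, Nat.add_right_cancel_iff] at h
  · rfl
  · rw [hf h]

theorem succ_mem_range_liftR {f : ℕ → ℕ} {k : ℕ} (h : k + 1 ∈ Set.range (liftR f)) :
    k ∈ Set.range f := by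
  obtain ⟨_ | i, hi⟩ := h
  · cases hi
  · exact ⟨i, Nat.succ_injective hi⟩

theorem rename_id (t : Tm) : rename id t = t := by
  induction t <;> simp_all [rename, liftR_id]

theorem rename_rename (f g : ℕ → ℕ) (t : Tm) : rename g (rename f t) = rename (g ∘ f) t := by
  induction t generalizing f g <;> simp_all [rename, liftR_comp]

def substAt (j : ℕ) (u : Tm) (k : ℕ) : Tm :=
  if k < j then var k else if k = j then rename (· + j) u else var (k - 1)

theorem substAt_self (j : ℕ) (u : Tm) : substAt j u j = rename (· + j) u := by
  simp [substAt]

theorem liftS_substAt (j : ℕ) (u : Tm) : liftS (substAt j u) = substAt (j + 1) u := by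
  funext k
  rcases k with _ | k
  · simp [liftS, substAt]
  rcases Nat.lt_trichotomy k j with hk | rfl | hk
  · simp [liftS, substAt, hk, rename]
  · simp only [liftS, substAt_self, rename_rename]
    congr 1
  · simp [liftS, substAt, rename, hk.not_gt, hk.ne', Nat.sub_add_cancel (Nat.one_le_of_lt hk)]

theorem subst0_eq_subst_substAt (u t : Tm) : subst0 u t = subst (substAt 0 u) t := by
  unfold subst0 substIn
  congr 1
  funext k
  rcases k with _ | k
  · simp only [substAt, Nat.lt_irrefl, if_false, if_true]
    exact (rename_id u).symm
  · simp [substAt]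

theorem exists_substAt_eq_var {j i : ℕ} (u : Tm) (hij : i ≠ j) :
    ∃ i', substAt j u i = var i' ∧ ∀ M, Ctx.insertAt j 0 (Ctx.single i' M) = Ctx.single i M := by
  rcases Nat.lt_or_gt_of_ne hij with h | h
  · refine ⟨i, by simp [substAt, h], fun M => ?_⟩
    funext k
    simp only [Ctx.insertAt, Ctx.single]
    split_ifs <;> first | rfl | omega
  · refine ⟨i - 1, by simp [substAt, h.not_gt, hij], fun M => ?_⟩
    funext k
    simp only [Ctx.insertAt, Ctx.single]
    split_ifs <;> first | rfl | omega

end Tm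

namespace DerU

theorem bang_nil (t : Tm) : DerU 0 (.bang t) (.mult []) 0 :=
  DerU.bg [] (by simp)

theorem bang_cons {Γ Δ : Ctx} {t : Tm} {σ : Ty} {L : List Ty} {n k : ℕ}
    (h : DerU Γ t σ n) (hs : DerU Δ (.bang t) (.mult L) k) :
    DerU (Γ + Δ) (.bang t) (.mult (σ :: L)) (n + k) := by
  cases hs with
  | bg prs hprs =>
    refine DerU.bg ((Γ, σ, n) :: prs) fun p hp => ?_
    rcases List.mem_cons.1 hp with rfl | hp
    exacts [h, hprs p hp]

theorem bang_append {Δ₁ Δ₂ : Ctx} {t : Tm} {L₁ L₂ : List Ty} {k₁ k₂ : ℕ}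
    (h₁ : DerU Δ₁ (.bang t) (.mult L₁) k₁) (h₂ : DerU Δ₂ (.bang t) (.mult L₂) k₂) :
    DerU (Δ₁ + Δ₂) (.bang t) (.mult (L₁ ++ L₂)) (k₁ + k₂) := by
  cases h₁ with
  | bg prs₁ hprs₁ =>
    cases h₂ with
    | bg prs₂ hprs₂ =>
      have h := DerU.bg (prs₁ ++ prs₂) fun p hp =>
        (List.mem_append.1 hp).elim (hprs₁ p) (hprs₂ p)
      simpa using h

theorem bang_induction {t : Tm} {P : Ctx → Ty → ℕ → Prop} (nil : P 0 (.mult []) 0)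
    (cons : ∀ {Γ Δ σ L n k}, DerU Γ t σ n → P Δ (.mult L) k →
      P (Γ + Δ) (.mult (σ :: L)) (n + k))
    {Δ : Ctx} {τ : Ty} {k : ℕ} (h : DerU Δ (.bang t) τ k) : P Δ τ k := by
  cases h with
  | bg prs hprs =>
    induction prs with
    | nil => exact nil
    | cons p prs ih =>
      exact cons (hprs p List.mem_cons_self) (ih fun q hq => hprs q (List.mem_cons_of_mem _ hq))

theorem esub_of_lam {Γ Δ : Ctx} {t u : Tm} {M : List Ty} {σ : Ty} {m k : ℕ}
    (ht : DerU Γ (.lam t) (.arr M σ) m) (hu : DerU Δ u (.mult M) k) :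
    DerU (Γ + Δ) (.esub t u) σ (m + k) := by
  cases ht with
  | abs _ ht hM => simpa only [Nat.add_right_comm] using DerU.es ht hu hM

theorem of_rename {f : ℕ → ℕ} (hf : Function.Injective f) {Γ : Ctx} {t : Tm} {τ : Ty} {n : ℕ}
    (h : DerU Γ (t.rename f) τ n) :
    DerU (Γ ∘ f) t τ n ∧ ∀ k ∉ Set.range f, Γ k = 0 := by
  induction t generalizing f Γ τ n with
  | var i =>
    cases h with
    | ax =>
      exact ⟨Ctx.single_comp hf i _ ▸ DerU.ax i τ, fun k hk => if_neg fun h => hk ⟨i, h.symm⟩⟩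
  | app a b iha ihb =>
    cases h with
    | app h₁ h₂ =>
      obtain ⟨d₁, z₁⟩ := iha hf h₁
      obtain ⟨d₂, z₂⟩ := ihb hf h₂
      exact ⟨DerU.app d₁ d₂, fun k hk => by simp [z₁ k hk, z₂ k hk]⟩
  | lam a iha =>
    cases h with
    | abs M h₁ hM =>
      obtain ⟨d₁, z₁⟩ := iha (Tm.liftR_injective hf) h₁
      exact ⟨DerU.abs M d₁ hM, fun k hk => z₁ (k + 1) (hk ∘ Tm.succ_mem_range_liftR)⟩
  | bang a iha =>
    refine bang_induction
      (P := fun Δ τ k => DerU (Δ ∘ f) (.bang a) τ k ∧ ∀ i ∉ Set.range f, Δ i = 0)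
      ⟨bang_nil a, fun _ _ => rfl⟩ (fun d ih => ?_) h
    obtain ⟨d', z⟩ := iha hf d
    exact ⟨bang_cons d' ih.1, fun k hk => by simp [z k hk, ih.2 k hk]⟩
  | der a iha =>
    cases h with
    | dr h₁ =>
      obtain ⟨d₁, z₁⟩ := iha hf h₁
      exact ⟨DerU.dr d₁, z₁⟩
  | esub a b iha ihb =>
    cases h with
    | es h₁ h₂ hM =>
      obtain ⟨d₁, z₁⟩ := iha (Tm.liftR_injective hf) h₁
      obtain ⟨d₂, z₂⟩ := ihb hf h₂
      exact ⟨DerU.es d₁ d₂ hM, fun k hk => by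
        simp [z₁ (k + 1) (hk ∘ Tm.succ_mem_range_liftR), z₂ k hk, Ctx.tail]⟩

end DerU

/-- `SubstSplit j u Γ' t τ n`: a derivation of `Γ' ⊢ t{j:=u} : τ` of size `n` splits into a
derivation of `t` in which `j` has some type `M` and a derivation of `!u : M` (with `u`
shifted under `j` binders). -/
def SubstSplit (j : ℕ) (u : Tm) (Γ' : Ctx) (t : Tm) (τ : Ty) (n : ℕ) : Prop :=
  ∃ (Γ Δ : Ctx) (M : List Ty) (m k : ℕ),
    DerU (Ctx.insertAt j M Γ) t τ m ∧
    DerU Δ (.bang (u.rename (· + j))) (.mult M) k ∧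
    Γ' = Γ + Δ ∧ n + M.length = m + k

namespace SubstSplit

variable {j : ℕ} {u : Tm}

theorem of_insertAt_zero {Γ : Ctx} {t : Tm} {τ : Ty} {n : ℕ}
    (h : DerU (Ctx.insertAt j 0 Γ) t τ n) : SubstSplit j u Γ t τ n :=
  ⟨Γ, 0, [], n, 0, h, DerU.bang_nil _, (add_zero Γ).symm, rfl⟩

theorem var_self {Γ : Ctx} {τ : Ty} {n : ℕ} (h : DerU Γ (u.rename (· + j)) τ n) :
    SubstSplit j u Γ (.var j) τ n := by
  refine ⟨0, Γ + 0, [τ], 1, n + 0, ?_, DerU.bang_cons h (DerU.bang_nil _), by simp,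
    by simp [Nat.add_comm]⟩
  rw [Ctx.insertAt_zero_ctx]
  exact DerU.ax j τ

theorem add {Γ₁ Γ₂ : Ctx} {t₁ t₂ t : Tm} {τ₁ τ₂ τ : Ty} {n₁ n₂ c : ℕ}
    (rule : ∀ {Γ₁ Γ₂ m₁ m₂}, DerU Γ₁ t₁ τ₁ m₁ → DerU Γ₂ t₂ τ₂ m₂ →
      DerU (Γ₁ + Γ₂) t τ (m₁ + m₂ + c))
    (h₁ : SubstSplit j u Γ₁ t₁ τ₁ n₁) (h₂ : SubstSplit j u Γ₂ t₂ τ₂ n₂) :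
    SubstSplit j u (Γ₁ + Γ₂) t τ (n₁ + n₂ + c) := by
  obtain ⟨Γ₁, Δ₁, M₁, m₁, k₁, ht₁, hu₁, rfl, hn₁⟩ := h₁
  obtain ⟨Γ₂, Δ₂, M₂, m₂, k₂, ht₂, hu₂, rfl, hn₂⟩ := h₂
  refine ⟨Γ₁ + Γ₂, Δ₁ + Δ₂, M₁ ++ M₂, m₁ + m₂ + c, k₁ + k₂, ?_, hu₁.bang_append hu₂,
    add_add_add_comm _ _ _ _, by simp only [List.length_append]; omega⟩
  rw [← Multiset.coe_add, ← Ctx.insertAt_add]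
  exact rule ht₁ ht₂

theorem lam {Γ : Ctx} {t : Tm} {τ : Ty} {M : List Ty} {n : ℕ}
    (h : SubstSplit (j + 1) u Γ t τ n) (hM : Multiset.ofList M = Γ 0) :
    SubstSplit j u (Ctx.tail Γ) (.lam t) (.arr M τ) (n + 1) := by
  obtain ⟨Γ₁, Δ₁, M₁, m, k, ht, hu, rfl, hn⟩ := h
  have hshift :
      (Tm.bang (u.rename (· + j))).rename (· + 1) = .bang (u.rename (· + (j + 1))) := by
    simp only [Tm.rename, Tm.rename_rename]
    rfl
  obtain ⟨hu', hΔ₁⟩ := DerU.of_rename (add_left_injective 1) (hshift ▸ hu)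
  have hΔ₁0 : Δ₁ 0 = 0 := hΔ₁ 0 fun ⟨i, hi⟩ => Nat.succ_ne_zero i hi
  refine ⟨Ctx.tail Γ₁, Δ₁ ∘ (· + 1), M₁, m + 1, k, ?_, hu', rfl, by omega⟩
  rw [← Ctx.tail_insertAt_succ]
  refine DerU.abs M ht ?_
  rw [Ctx.insertAt_succ_apply_zero, hM, Pi.add_apply, hΔ₁0, add_zero]

theorem der {Γ : Ctx} {t : Tm} {σ : Ty} {n : ℕ} (h : SubstSplit j u Γ t (.mult [σ]) n) :
    SubstSplit j u Γ (.der t) σ (n + 1) := by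
  obtain ⟨Γ₁, Δ, M, m, k, ht, hu, rfl, hn⟩ := h
  exact ⟨Γ₁, Δ, M, m + 1, k, DerU.dr ht, hu, rfl, by omega⟩

theorem of_derU_subst {t : Tm} {Γ' : Ctx} {τ : Ty} {n : ℕ}
    (h : DerU Γ' (t.subst (Tm.substAt j u)) τ n) : SubstSplit j u Γ' t τ n := by
  induction t generalizing j Γ' τ n with
  | var i =>
    by_cases hij : i = j
    · subst hij
      exact var_self (Tm.substAt_self i u ▸ h)
    · obtain ⟨i', hi', hsingle⟩ := Tm.exists_substAt_eq_var u hij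
      rw [Tm.subst, hi'] at h
      cases h
      exact of_insertAt_zero (hsingle _ ▸ DerU.ax i τ)
  | app a b iha ihb =>
    cases h with
    | app h₁ h₂ => exact add DerU.app (iha h₁) (ihb h₂)
  | lam a iha =>
    rw [Tm.subst, Tm.liftS_substAt] at h
    cases h with
    | abs M h₁ hM => exact lam (iha h₁) hM
  | bang a iha =>
    exact DerU.bang_induction (P := fun Δ τ k => SubstSplit j u Δ (.bang a) τ k)
      (of_insertAt_zero ((Ctx.insertAt_zero_zero j).symm ▸ DerU.bang_nil a))
      (fun d ih => add (c := 0) DerU.bang_cons (iha d) ih) h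
  | der a iha =>
    cases h with
    | dr h₁ => exact der (iha h₁)
  | esub a b iha ihb =>
    rw [Tm.subst, Tm.liftS_substAt] at h
    cases h with
    | es h₁ h₂ hM =>
      simpa only [Nat.add_zero, Nat.add_right_comm] using
        add (c := 0) DerU.esub_of_lam (lam (iha h₁) hM) (ihb h₂)

end SubstSplit

/-- The family `(Δᵢ, σᵢ, mᵢ)_{i∈I}` is the list `prs`, the variable `x` is the de Bruijn
index `0`, and the size equation is stated with `|I|` moved to the left. -/
theorem anti_substitution {Γ' : Ctx} {t u : Tm} {τ : Ty} {n : ℕ}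
    (h : DerU Γ' (Tm.subst0 u t) τ n) :
    ∃ (prs : List (Ctx × Ty × ℕ)) (Γ : Ctx) (m : ℕ),
      DerU (Ctx.cons (Multiset.ofList (prs.map (·.2.1))) Γ) t τ m ∧
      (∀ p ∈ prs, DerU p.1 u p.2.1 p.2.2) ∧
      Γ' = Γ + (prs.map (·.1)).sum ∧
      n + prs.length = m + (prs.map (·.2.2)).sum := by
  rw [Tm.subst0_eq_subst_substAt] at h
  obtain ⟨Γ, Δ, M, m, k, ht, hu, rfl, hn⟩ := SubstSplit.of_derU_subst h
  rw [Ctx.insertAt_zero] at ht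
  rw [show (· + 0 : ℕ → ℕ) = id from rfl, Tm.rename_id] at hu
  cases hu with
  | bg prs hprs => exact ⟨prs, Γ, m, ht, hprs, rfl, by simpa using hn⟩
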